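/- Let m = n = 2 and h(θ) = max{|θ_1|, |θ_2|, |θ_1 − θ_2|}, with generated norm H on ℝ^{2×2}. Set e_1 = (1, 0), e_2 = (1/2, √3/2), e_3 = (1/2, −√3/2), θ¹ = (1, 1), θ² = (1, 0), θ³ = (0, 1), and p_{-1} = e_1, p_{-2} = e_1 + e_2, p_{-3} = e_1 + e_3, p_{+i} = −p_{-i} for i = 1, 2, 3. Let F_0 = θ² (δ_{p_{-2}} − δ_{p_{+2}}) + θ³ (δ_{p_{-3}} − δ_{p_{+3}}) and let F be the ℝ^{2×2}-valued measure F = θ¹ ⊗ e_1 ℋ¹⌞[p_{+1}, p_{-1}] + θ² ⊗ e_2 ℋ¹⌞([p_{+2}, p_{+1}] ∪ [p_{-1}, p_{-2}]) + θ³ ⊗ e_3 ℋ¹⌞([p_{+3}, p_{+1}] ∪ [p_{-1}, p_{-3}]). Then ∂F = F_0 and F minimizes |·|_H among all compactly supported finite ℝ^{2×2}-valued Borel measures G with ∂G = F_0. -/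

import Mathlib

open MeasureTheory

noncomputable section

/-- `ℝ^n` with the Euclidean norm. -/
abbrev Euc (n : ℕ) := EuclideanSpace ℝ (Fin n)

/-- `h` is a norm on `ℝ^m`. -/
def IsNorm {m : ℕ} (h : (Fin m → ℝ) → ℝ) : Prop :=
  (∀ x y, h (x + y) ≤ h x + h y) ∧ (∀ (c : ℝ) (x), h (c • x) = |c| * h x) ∧
    ∀ x, h x = 0 → x = 0

/-- The dual norm `h_*` of `h`: `h_*(g) = sup { g·θ : h θ ≤ 1 }`. -/
def dualNorm {m : ℕ} (h : (Fin m → ℝ) → ℝ) (g : Fin m → ℝ) : ℝ :=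
  sSup {r | ∃ θ : Fin m → ℝ, h θ ≤ 1 ∧ r = ∑ i, g i * θ i}

/-- Matrix-vector product `M u`. -/
def matVec {m n : ℕ} (M : Fin m → Fin n → ℝ) (u : Euc n) : Fin m → ℝ :=
  fun i => ∑ j, M i j * u j

/-- Frobenius inner product `M : N`. -/
def frob {m n : ℕ} (M N : Fin m → Fin n → ℝ) : ℝ := ∑ i, ∑ j, M i j * N i j

/-- `M ∈ ∂H(0)`, i.e. `h_*(M u) ≤ 1` for all `|u| ≤ 1`. -/
def inSubdiffH {m n : ℕ} (h : (Fin m → ℝ) → ℝ) (M : Fin m → Fin n → ℝ) : Prop :=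
  ∀ u : Euc n, ‖u‖ ≤ 1 → dualNorm h (matVec M u) ≤ 1

/-- The norm `H` on `ℝ^{m×n}` generated by `h`:
`H(N) = sup { M:N : M ∈ ∂H(0) }`. -/
def genNorm {m n : ℕ} (h : (Fin m → ℝ) → ℝ) (N : Fin m → Fin n → ℝ) : ℝ :=
  sSup {r | ∃ M : Fin m → Fin n → ℝ, inSubdiffH h M ∧ r = frob M N}

/-- The rank-one matrix `θ ⊗ e`. -/
def outer {m n : ℕ} (θ : Fin m → ℝ) (e : Euc n) : Fin m → Fin n → ℝ :=
  fun i j => θ i * e j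

/-- An `ℝ^{m×n}`-valued Borel measure on `ℝ^n`, given by its component signed measures. -/
abbrev MatMeas (m n : ℕ) := Fin m → Fin n → MeasureTheory.SignedMeasure (Euc n)

/-- An `ℝ^m`-valued Borel measure on `ℝ^n`, given by its component signed measures. -/
abbrev VecMeas (m n : ℕ) := Fin m → MeasureTheory.SignedMeasure (Euc n)

/-- Integral of a function against a signed measure (via the Jordan decomposition). -/
def sInt {n : ℕ} (ν : MeasureTheory.SignedMeasure (Euc n)) (f : Euc n → ℝ) : ℝ :=
  ∫ x, f x ∂ν.toJordanDecomposition.posPart - ∫ x, f x ∂ν.toJordanDecomposition.negPart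

/-- The total variation `|F|_H` of `F` with respect to the norm `H` generated by `h`:
the supremum of `Σ_k H(F(B_k))` over countable Borel partitions `(B_k)` of `ℝ^n`. -/
def tvH {m n : ℕ} (h : (Fin m → ℝ) → ℝ) (F : MatMeas m n) : ℝ :=
  sSup {r | ∃ B : ℕ → Set (Euc n), (∀ k, MeasurableSet (B k)) ∧
    Pairwise (Function.onFun Disjoint B) ∧ (⋃ k, B k) = Set.univ ∧
    r = ∑' k, genNorm h (fun i j => F i j (B k))}

/-- `F` is supported in `K`: it vanishes on Borel sets disjoint from `K`. -/
def suppIn {m n : ℕ} (F : MatMeas m n) (K : Set (Euc n)) : Prop :=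
  ∀ B : Set (Euc n), MeasurableSet B → Disjoint B K → ∀ i j, F i j B = 0

/-- `F` is compactly supported. -/
def suppInCpt {m n : ℕ} (F : MatMeas m n) : Prop :=
  ∃ K : Set (Euc n), IsCompact K ∧ suppIn F K

/-- `F₀` is compactly supported. -/
def vSuppInCpt {m n : ℕ} (F0 : VecMeas m n) : Prop :=
  ∃ K : Set (Euc n), IsCompact K ∧
    ∀ B : Set (Euc n), MeasurableSet B → Disjoint B K → ∀ i, F0 i B = 0

/-- The Jacobian matrix `Dψ(x) ∈ ℝ^{m×n}` of `ψ : ℝ^n → ℝ^m`. -/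
def jac {m n : ℕ} (ψ : Euc n → (Fin m → ℝ)) (x : Euc n) : Fin m → Fin n → ℝ :=
  fun i j => fderiv ℝ ψ x (EuclideanSpace.single j 1) i

/-- `∂F = F₀`, i.e. `∫ Dψ : dF = ∫ ψ · dF₀` for all smooth compactly supported `ψ`. -/
def isBoundary {m n : ℕ} (F : MatMeas m n) (F0 : VecMeas m n) : Prop :=
  ∀ ψ : Euc n → (Fin m → ℝ), ContDiff ℝ (⊤ : ℕ∞) ψ → HasCompactSupport ψ →
    (∑ i, ∑ j, sInt (F i j) fun x => jac ψ x i j) = ∑ i, sInt (F0 i) fun x => ψ x i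

/-- `φ` is an admissible dual potential: `h_*(φ(y) - φ(x)) ≤ |y - x|`. -/
def admissible {m n : ℕ} (h : (Fin m → ℝ) → ℝ) (φ : Euc n → Fin m → ℝ) : Prop :=
  ∀ x y : Euc n, dualNorm h (φ y - φ x) ≤ ‖y - x‖

/-- The dual objective `∫ φ · dF₀`. -/
def intDual {m n : ℕ} (F0 : VecMeas m n) (φ : Euc n → Fin m → ℝ) : ℝ :=
  ∑ i, sInt (F0 i) fun x => φ x i

open scoped ENNReal

/-- The norm `h(θ) = max{|θ₁|, |θ₂|, |θ₁ - θ₂|}` on `ℝ²`. -/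
def h2 : (Fin 2 → ℝ) → ℝ := fun θ => max (max |θ 0| |θ 1|) |θ 0 - θ 1|

/-- A point of `ℝ²`. -/
def pt (a b : ℝ) : Euc 2 := WithLp.toLp 2 ![a, b]

/-- The value of the Dirac measure `δ_p` on the set `B`. -/
def dirac01 (p : Euc 2) (B : Set (Euc 2)) : ℝ := Set.indicator B (fun _ => 1) p

/-- The value on `B` of the measure `θ ⊗ e ℋ¹⌞S`, at entry `(i, j)`. -/
def segMass (S : Set (Euc 2)) (θ : Fin 2 → ℝ) (e : Euc 2) (B : Set (Euc 2))
    (i j : Fin 2) : ℝ :=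
  (μH[1] (B ∩ S)).toReal * (θ i * e j)

def e1 : Euc 2 := pt 1 0
def e2 : Euc 2 := pt (1/2) (Real.sqrt 3 / 2)
def e3 : Euc 2 := pt (1/2) (-(Real.sqrt 3) / 2)
def θ1 : Fin 2 → ℝ := ![1, 1]
def θ2 : Fin 2 → ℝ := ![1, 0]
def θ3 : Fin 2 → ℝ := ![0, 1]

def pm1 : Euc 2 := e1
def pm2 : Euc 2 := e1 + e2
def pm3 : Euc 2 := e1 + e3
def pp1 : Euc 2 := -pm1
def pp2 : Euc 2 := -pm2
def pp3 : Euc 2 := -pm3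


/-!
The network `F` is a sum of five segments `θₛ ⊗ eₛ ℋ¹⌞[aₛ, bₛ]` with `|eₛ| = 1`. The fundamental
theorem of calculus along each segment gives `∫ Dψ : dF = ∑ₛ θₛ · (ψ(bₛ) - ψ(aₛ))`, which telescopes
to `∫ ψ · dF₀` because `θ¹ = θ² + θ³` (Kirchhoff's law at `p₊₁` and `p₋₁`). Since `h(θₛ) ≤ 1`,
each segment costs at most its length, so `|F|_H ≤ 2 + 4 · 1 = 6`.

For the lower bound, the matrix `M` with rows `e₂, e₃` lies in `∂H(0)`: `h_*(g)` is at most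
`max {|g₁|, |g₂|, |g₁ + g₂|}` and `e₂ + e₃ = e₁`. Testing `∂G = F₀` against a field equal to
`x ↦ M x` near the supports of `G` and `F₀` gives
`M : G(ℝ²) = e₂ · (p₋₂ - p₊₂) + e₃ · (p₋₃ - p₊₃) = 6`, hence `|G|_H ≥ H(G(ℝ²)) ≥ 6`.
-/

open Set Topology

section GeneratedNorm

variable {m n : ℕ} {h : (Fin m → ℝ) → ℝ}

lemma dualNorm_zero : dualNorm h 0 = 0 :=
  le_antisymm (Real.sSup_nonpos (by rintro _ ⟨_, _, rfl⟩; simp))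
    (Real.sSup_nonneg (by rintro _ ⟨_, _, rfl⟩; simp))

lemma le_dualNorm (hcube : ∀ θ, h θ ≤ 1 → ∀ i, |θ i| ≤ 1) {θ : Fin m → ℝ} (hθ : h θ ≤ 1)
    (g : Fin m → ℝ) : ∑ i, g i * θ i ≤ dualNorm h g := by
  refine le_csSup ⟨∑ i, |g i|, ?_⟩ ⟨θ, hθ, rfl⟩
  rintro r ⟨θ', hθ', rfl⟩
  refine Finset.sum_le_sum fun i _ => (le_abs_self _).trans ?_
  rw [abs_mul]
  exact mul_le_of_le_one_right (abs_nonneg _) (hcube θ' hθ' i)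

lemma abs_le_dualNorm (hcube : ∀ θ, h θ ≤ 1 → ∀ i, |θ i| ≤ 1)
    (hbasis : ∀ i, h (Pi.single i 1) ≤ 1 ∧ h (-Pi.single i 1) ≤ 1) (g : Fin m → ℝ) (i : Fin m) :
    |g i| ≤ dualNorm h g := by
  rcases abs_cases (g i) with ⟨hg, -⟩ | ⟨hg, -⟩
  · simpa [hg, Pi.single_apply] using le_dualNorm hcube (hbasis i).1 g
  · simpa [hg, Pi.single_apply] using le_dualNorm hcube (hbasis i).2 g

lemma inSubdiffH_zero : inSubdiffH h (0 : Fin m → Fin n → ℝ) := fun u _ => by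
  have : matVec (0 : Fin m → Fin n → ℝ) u = 0 := by ext; simp [matVec]
  rw [this, dualNorm_zero]
  exact zero_le_one

lemma matVec_single (M : Fin m → Fin n → ℝ) (j : Fin n) :
    matVec M (EuclideanSpace.single j 1) = fun i => M i j := by
  ext i
  simp [matVec]

lemma abs_le_one_of_inSubdiffH (hcube : ∀ θ, h θ ≤ 1 → ∀ i, |θ i| ≤ 1)
    (hbasis : ∀ i, h (Pi.single i 1) ≤ 1 ∧ h (-Pi.single i 1) ≤ 1)
    {M : Fin m → Fin n → ℝ} (hM : inSubdiffH h M) (i : Fin m) (j : Fin n) : |M i j| ≤ 1 := by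
  have := hM (EuclideanSpace.single j 1) (by simp)
  rw [matVec_single] at this
  exact (abs_le_dualNorm hcube hbasis (fun i => M i j) i).trans this

lemma frob_le_sum_abs (hcube : ∀ θ, h θ ≤ 1 → ∀ i, |θ i| ≤ 1)
    (hbasis : ∀ i, h (Pi.single i 1) ≤ 1 ∧ h (-Pi.single i 1) ≤ 1)
    {M : Fin m → Fin n → ℝ} (hM : inSubdiffH h M) (N : Fin m → Fin n → ℝ) :
    frob M N ≤ ∑ i, ∑ j, |N i j| := by
  refine Finset.sum_le_sum fun i _ => Finset.sum_le_sum fun j _ => (le_abs_self _).trans ?_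
  rw [abs_mul]
  exact mul_le_of_le_one_left (abs_nonneg _) (abs_le_one_of_inSubdiffH hcube hbasis hM i j)

lemma le_genNorm (hcube : ∀ θ, h θ ≤ 1 → ∀ i, |θ i| ≤ 1)
    (hbasis : ∀ i, h (Pi.single i 1) ≤ 1 ∧ h (-Pi.single i 1) ≤ 1)
    {M : Fin m → Fin n → ℝ} (hM : inSubdiffH h M) (N : Fin m → Fin n → ℝ) :
    frob M N ≤ genNorm h N := by
  refine le_csSup ⟨∑ i, ∑ j, |N i j|, ?_⟩ ⟨M, hM, rfl⟩
  rintro r ⟨M', hM', rfl⟩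
  exact frob_le_sum_abs hcube hbasis hM' N

lemma genNorm_nonneg (N : Fin m → Fin n → ℝ) : 0 ≤ genNorm h N := by
  by_cases hb : BddAbove {r | ∃ M : Fin m → Fin n → ℝ, inSubdiffH h M ∧ r = frob M N}
  · exact le_csSup hb ⟨0, inSubdiffH_zero, by simp [frob]⟩
  · rw [genNorm, Real.sSup_of_not_bddAbove hb]

lemma genNorm_le {N : Fin m → Fin n → ℝ} {c : ℝ} (hc : 0 ≤ c)
    (hN : ∀ M, inSubdiffH h M → frob M N ≤ c) : genNorm h N ≤ c :=
  Real.sSup_le (by rintro r ⟨M, hM, rfl⟩; exact hN M hM) hc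

lemma genNorm_zero : genNorm h (0 : Fin m → Fin n → ℝ) = 0 :=
  (genNorm_le le_rfl fun M _ => by simp [frob]).antisymm (genNorm_nonneg 0)

lemma genNorm_le_sum_abs (hcube : ∀ θ, h θ ≤ 1 → ∀ i, |θ i| ≤ 1)
    (hbasis : ∀ i, h (Pi.single i 1) ≤ 1 ∧ h (-Pi.single i 1) ≤ 1) (N : Fin m → Fin n → ℝ) :
    genNorm h N ≤ ∑ i, ∑ j, |N i j| :=
  genNorm_le (by positivity) fun _ hM => frob_le_sum_abs hcube hbasis hM N

lemma frob_outer (M : Fin m → Fin n → ℝ) (θ : Fin m → ℝ) (e : Euc n) :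
    frob M (outer θ e) = ∑ i, matVec M e i * θ i := by
  simp only [frob, outer, matVec, Finset.sum_mul]
  exact Finset.sum_congr rfl fun i _ => Finset.sum_congr rfl fun j _ => by ring

lemma genNorm_sum_smul_outer_le (hcube : ∀ θ, h θ ≤ 1 → ∀ i, |θ i| ≤ 1) {ι : Type*}
    [Fintype ι] {c : ι → ℝ} (hc : ∀ s, 0 ≤ c s) {θ : ι → Fin m → ℝ} (hθ : ∀ s, h (θ s) ≤ 1)
    {e : ι → Euc n} (he : ∀ s, ‖e s‖ ≤ 1) :
    genNorm h (∑ s, c s • outer (θ s) (e s)) ≤ ∑ s, c s := by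
  refine genNorm_le (Finset.sum_nonneg fun s _ => hc s) fun M hM => ?_
  have hentry : ∀ i j, (∑ s, c s • outer (θ s) (e s)) i j = ∑ s, c s * outer (θ s) (e s) i j :=
    fun i j => by simp only [Finset.sum_apply, Pi.smul_apply, smul_eq_mul]
  have hlin : frob M (∑ s, c s • outer (θ s) (e s)) = ∑ s, c s * frob M (outer (θ s) (e s)) := by
    simp only [frob, hentry, Finset.mul_sum]
    conv_rhs => rw [Finset.sum_comm]; arg 2; ext i; rw [Finset.sum_comm]
    exact Finset.sum_congr rfl fun i _ => Finset.sum_congr rfl fun j _ =>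
      Finset.sum_congr rfl fun s _ => by ring
  rw [hlin]
  refine Finset.sum_le_sum fun s _ => mul_le_of_le_one_right (hc s) ?_
  rw [frob_outer]
  exact (le_dualNorm hcube (hθ s) _).trans (hM _ (he s))

end GeneratedNorm

section TotalVariation

variable {m n : ℕ} {h : (Fin m → ℝ) → ℝ}

lemma abs_apply_le_totalVariation {α : Type*} [MeasurableSpace α] (ν : SignedMeasure α)
    {B : Set α} (hB : MeasurableSet B) : |ν B| ≤ ν.totalVariation.real B := by
  rw [SignedMeasure.totalVariation, measureReal_add_apply,
    SignedMeasure.apply_eq_posPart_real_sub_negPart_real ν hB]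
  have hp : 0 ≤ ν.toJordanDecomposition.posPart.real B := measureReal_nonneg
  have hq : 0 ≤ ν.toJordanDecomposition.negPart.real B := measureReal_nonneg
  rw [abs_le]
  constructor <;> linarith

lemma tsum_genNorm_le_of_le (F : MatMeas m n) (μ : Measure (Euc n)) [IsFiniteMeasure μ]
    (hF : ∀ B, MeasurableSet B → genNorm h (fun i j => F i j B) ≤ μ.real B)
    {B : ℕ → Set (Euc n)} (hmeas : ∀ k, MeasurableSet (B k))
    (hdisj : Pairwise (Function.onFun Disjoint B)) (hcov : ⋃ k, B k = univ) :
    ∑' k, genNorm h (fun i j => F i j (B k)) ≤ μ.real univ := by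
  have hμ : HasSum (fun k => μ.real (B k)) (μ.real univ) := by
    have := ENNReal.hasSum_toReal (f := fun k => μ (B k))
      (by rw [← measure_iUnion hdisj hmeas]; finiteness)
    rwa [← ENNReal.tsum_toReal_eq (fun k => measure_ne_top μ _), ← measure_iUnion hdisj hmeas,
      hcov] at this
  have hle : ∀ k, genNorm h (fun i j => F i j (B k)) ≤ μ.real (B k) := fun k => hF _ (hmeas k)
  exact hasSum_le hle
    (hμ.summable.of_nonneg_of_le (fun _ => genNorm_nonneg _) hle).hasSum hμ

lemma tvH_le_of_le (F : MatMeas m n) (μ : Measure (Euc n)) [IsFiniteMeasure μ]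
    (hF : ∀ B, MeasurableSet B → genNorm h (fun i j => F i j B) ≤ μ.real B) :
    tvH h F ≤ μ.real univ :=
  Real.sSup_le (fun _ ⟨_, hmeas, hdisj, hcov, hr⟩ =>
    hr ▸ tsum_genNorm_le_of_le F μ hF hmeas hdisj hcov) measureReal_nonneg

lemma bddAbove_tvH (hcube : ∀ θ, h θ ≤ 1 → ∀ i, |θ i| ≤ 1)
    (hbasis : ∀ i, h (Pi.single i 1) ≤ 1 ∧ h (-Pi.single i 1) ≤ 1) (G : MatMeas m n) :
    BddAbove {r | ∃ B : ℕ → Set (Euc n), (∀ k, MeasurableSet (B k)) ∧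
      Pairwise (Function.onFun Disjoint B) ∧ (⋃ k, B k) = univ ∧
      r = ∑' k, genNorm h (fun i j => G i j (B k))} := by
  set μ : Measure (Euc n) := ∑ i, ∑ j, (G i j).totalVariation
  refine ⟨μ.real univ, ?_⟩
  rintro r ⟨B, hmeas, hdisj, hcov, rfl⟩
  refine tsum_genNorm_le_of_le G μ (fun B hB => ?_) hmeas hdisj hcov
  have hμB : μ.real B = ∑ i, ∑ j, (G i j).totalVariation.real B := by
    simp only [μ, measureReal_def, Measure.finsetSum_apply]
    rw [ENNReal.toReal_sum fun i _ => ENNReal.sum_ne_top.mpr fun j _ => measure_ne_top _ _]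
    exact Finset.sum_congr rfl fun i _ => ENNReal.toReal_sum fun j _ => measure_ne_top _ _
  rw [hμB]
  exact (genNorm_le_sum_abs hcube hbasis _).trans (Finset.sum_le_sum fun i _ =>
    Finset.sum_le_sum fun j _ => abs_apply_le_totalVariation _ hB)

lemma genNorm_univ_le_tvH (hcube : ∀ θ, h θ ≤ 1 → ∀ i, |θ i| ≤ 1)
    (hbasis : ∀ i, h (Pi.single i 1) ≤ 1 ∧ h (-Pi.single i 1) ≤ 1) (G : MatMeas m n) :
    genNorm h (fun i j => G i j univ) ≤ tvH h G := by
  classical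
  refine le_csSup (bddAbove_tvH hcube hbasis G)
    ⟨fun k => if k = 0 then univ else ∅, fun k => by dsimp only; split_ifs <;> simp, ?_, ?_, ?_⟩
  · intro a b hab
    simp only [Function.onFun]
    split_ifs <;> simp_all
  · exact Set.eq_univ_of_forall fun x => Set.mem_iUnion.mpr ⟨0, by simp⟩
  · rw [tsum_eq_single 0 fun k hk => by
      simp only [hk, if_false, VectorMeasure.empty]
      exact genNorm_zero]
    simp

end TotalVariation

section SignedIntegral

variable {d : ℕ}

lemma sInt_eq_integral_sub {ν : SignedMeasure (Euc d)} {μ₁ μ₂ : Measure (Euc d)}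
    [IsFiniteMeasure μ₁] [IsFiniteMeasure μ₂]
    (hν : ∀ B, MeasurableSet B → ν B = μ₁.real B - μ₂.real B) {f : Euc d → ℝ}
    (hf : Continuous f) (hfc : HasCompactSupport f) :
    sInt ν f = ∫ x, f x ∂μ₁ - ∫ x, f x ∂μ₂ := by
  set p := ν.toJordanDecomposition.posPart
  set q := ν.toJordanDecomposition.negPart
  have hpq : p + μ₂ = q + μ₁ := by
    refine Measure.ext fun B hB => ?_
    have := (SignedMeasure.apply_eq_posPart_real_sub_negPart_real ν hB).symm.trans (hν B hB)
    rw [← ENNReal.toReal_eq_toReal_iff' (measure_ne_top _ _) (measure_ne_top _ _)]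
    change (p + μ₂).real B = (q + μ₁).real B
    rw [measureReal_add_apply, measureReal_add_apply]
    linarith
  have hint : ∀ (μ : Measure (Euc d)) [IsFiniteMeasure μ], Integrable f μ :=
    fun μ _ => hf.integrable_of_hasCompactSupport hfc
  have := congrArg (fun μ => ∫ x, f x ∂μ) hpq
  simp only [integral_add_measure (hint _) (hint _)] at this
  rw [sInt]
  linarith

lemma sInt_eq_sum_integral {ι : Type*} [Fintype ι] {ν : SignedMeasure (Euc d)}
    (μ : ι → Measure (Euc d)) [∀ s, IsFiniteMeasure (μ s)] (c : ι → ℝ)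
    (hν : ∀ B, MeasurableSet B → ν B = ∑ s, c s * (μ s).real B) {f : Euc d → ℝ}
    (hf : Continuous f) (hfc : HasCompactSupport f) :
    sInt ν f = ∑ s, c s * ∫ x, f x ∂μ s := by
  have hint : ∀ (μ : Measure (Euc d)) [IsFiniteMeasure μ], Integrable f μ :=
    fun μ _ => hf.integrable_of_hasCompactSupport hfc
  rw [sInt_eq_integral_sub (μ₁ := ∑ s, (c s).toNNReal • μ s)
      (μ₂ := ∑ s, (-c s).toNNReal • μ s) (fun B hB => ?_) hf hfc,
    integral_finsetSum_measure fun s _ => hint _, integral_finsetSum_measure fun s _ => hint _,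
    ← Finset.sum_sub_distrib]
  · refine Finset.sum_congr rfl fun s _ => ?_
    simp only [integral_smul_nnreal_measure, NNReal.smul_def, smul_eq_mul, Real.coe_toNNReal',
      ← sub_mul, max_zero_sub_max_neg_zero_eq_self]
  · rw [hν B hB, measureReal_def, measureReal_def, Measure.finsetSum_apply,
      Measure.finsetSum_apply, ENNReal.toReal_sum (fun s _ => by finiteness),
      ENNReal.toReal_sum (fun s _ => by finiteness), ← Finset.sum_sub_distrib]
    refine Finset.sum_congr rfl fun s _ => ?_
    simp only [← measureReal_def, measureReal_nnreal_smul_apply, Real.coe_toNNReal', ← sub_mul,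
      max_zero_sub_max_neg_zero_eq_self]

lemma sInt_eq_mul_apply_univ {ν : SignedMeasure (Euc d)} {K : Set (Euc d)}
    (hK : MeasurableSet K) (hνK : ∀ B, MeasurableSet B → Disjoint B K → ν B = 0)
    {f : Euc d → ℝ} {c : ℝ} (hf : EqOn f (fun _ => c) K) : sInt ν f = c * ν univ := by
  obtain ⟨i, hi, hi₂, hi₃, hpos, hneg⟩ := ν.toJordanDecomposition_spec
  have hKc : ν.toJordanDecomposition.posPart Kᶜ = 0 ∧ ν.toJordanDecomposition.negPart Kᶜ = 0 := by
    rw [hpos, hneg, SignedMeasure.toMeasureOfZeroLE_apply _ _ _ hK.compl,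
      SignedMeasure.toMeasureOfLEZero_apply _ _ _ hK.compl]
    simp [hνK _ (hi.inter hK.compl) (disjoint_compl_left.mono_left inter_subset_right),
      hνK _ (hi.compl.inter hK.compl) (disjoint_compl_left.mono_left inter_subset_right)]
  have hae : ∀ μ : Measure (Euc d), μ Kᶜ = 0 → ∫ x, f x ∂μ = ∫ _, c ∂μ := fun μ hμ =>
    integral_congr_ae (measure_eq_zero_iff_ae_notMem.mp hμ |>.mono fun x hx =>
      hf (not_not.mp hx))
  rw [sInt, hae _ hKc.1, hae _ hKc.2, integral_const, integral_const,
    SignedMeasure.apply_eq_posPart_real_sub_negPart_real ν MeasurableSet.univ]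
  simp only [smul_eq_mul, measureReal_def]
  ring

end SignedIntegral

section Segments

lemma Isometry.hausdorffMeasure_restrict_image {X Y : Type*} [MetricSpace X] [CompleteSpace X]
    [MeasurableSpace X] [BorelSpace X] [MetricSpace Y] [MeasurableSpace Y] [BorelSpace Y]
    {f : X → Y} (hf : Isometry f) {d : ℝ} (hd : 0 ≤ d) {S : Set X} (hS : MeasurableSet S) :
    (μH[d] : Measure Y).restrict (f '' S) = Measure.map f ((μH[d] : Measure X).restrict S) := by
  have hemb : MeasurableEmbedding f := hf.isClosedEmbedding.measurableEmbedding
  calc (μH[d] : Measure Y).restrict (f '' S)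
      = ((μH[d] : Measure Y).restrict (range f)).restrict (f '' S) := by
        rw [Measure.restrict_restrict (hemb.measurableSet_image.mpr hS),
          inter_eq_left.mpr (image_subset_range f S)]
    _ = Measure.map f ((μH[d] : Measure X).restrict (f ⁻¹' (f '' S))) := by
        rw [← hf.map_hausdorffMeasure (Or.inl hd), hemb.restrict_map]
    _ = Measure.map f ((μH[d] : Measure X).restrict S) := by
        rw [hf.injective.preimage_image]

variable {E : Type*} [NormedAddCommGroup E] [NormedSpace ℝ E]

lemma isometry_add_smul (a : E) {e : E} (he : ‖e‖ = 1) : Isometry fun t : ℝ => a + t • e :=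
  Isometry.of_dist_eq fun t s => by
    rw [dist_eq_norm, dist_eq_norm, add_sub_add_left_eq_sub, ← sub_smul, norm_smul, he, mul_one,
      Real.norm_eq_abs]

lemma segment_eq_image_Icc (a e : E) {L : ℝ} (hL : 0 ≤ L) :
    segment ℝ a (a + L • e) = (fun t : ℝ => a + t • e) '' Icc 0 L := by
  have := image_segment ℝ (AffineMap.lineMap a (a + e)) 0 L
  simp only [AffineMap.lineMap_apply, vsub_eq_sub, add_sub_cancel_left, vadd_eq_add, zero_smul,
    zero_add, segment_eq_Icc hL] at this
  rw [add_comm a, ← this]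
  exact image_congr fun t _ => by simp [AffineMap.lineMap_apply, add_comm]

variable [MeasurableSpace E] [BorelSpace E]

lemma setIntegral_segment_eq_intervalIntegral (a : E) {e : E} (he : ‖e‖ = 1) {L : ℝ}
    (hL : 0 ≤ L) (f : E → ℝ) :
    ∫ x in segment ℝ a (a + L • e), f x ∂μH[1] = ∫ t in (0 : ℝ)..L, f (a + t • e) := by
  have hγ := isometry_add_smul a he
  rw [segment_eq_image_Icc a e hL, hγ.hausdorffMeasure_restrict_image zero_le_one measurableSet_Icc,
    hγ.isClosedEmbedding.measurableEmbedding.integral_map, hausdorffMeasure_real,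
    intervalIntegral.integral_of_le hL, integral_Icc_eq_integral_Ioc]

lemma integral_fderiv_segment {g : E → ℝ} (hg : ContDiff ℝ 1 g) (a : E) {e : E} (he : ‖e‖ = 1)
    {L : ℝ} (hL : 0 ≤ L) :
    ∫ x in segment ℝ a (a + L • e), fderiv ℝ g x e ∂μH[1] = g (a + L • e) - g a := by
  rw [setIntegral_segment_eq_intervalIntegral a he hL]
  have hderiv : ∀ t : ℝ, HasDerivAt (fun t => g (a + t • e)) (fderiv ℝ g (a + t • e) e) t :=
    fun t => (hg.differentiable one_ne_zero _).hasFDerivAt.comp_hasDerivAt t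
      (((hasDerivAt_id t).smul_const e).const_add a |>.congr_deriv (one_smul ℝ e))
  have hcont : Continuous fun t : ℝ => fderiv ℝ g (a + t • e) e :=
    ((hg.continuous_fderiv one_ne_zero).comp (by fun_prop)).clm_apply continuous_const
  rw [intervalIntegral.integral_eq_sub_of_hasDerivAt (fun t _ => hderiv t)
    (hcont.intervalIntegrable 0 L), zero_smul, add_zero]

end Segments

section Network

variable {m n : ℕ}

lemma sum_mul_jac {ψ : Euc n → Fin m → ℝ} {x : Euc n} (hψ : DifferentiableAt ℝ ψ x) (v : Euc n)
    (i : Fin m) : ∑ j, v j * jac ψ x i j = fderiv ℝ (fun y => ψ y i) x v := by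
  rw [fderiv_apply hψ i]
  conv_rhs => rw [← (EuclideanSpace.basisFun (Fin n) ℝ).sum_repr v]
  simp [jac]

lemma continuous_jac {ψ : Euc n → Fin m → ℝ} (hψ : ContDiff ℝ 1 ψ) (i : Fin m) (j : Fin n) :
    Continuous fun x => jac ψ x i j :=
  (continuous_apply i).comp ((hψ.continuous_fderiv one_ne_zero).clm_apply continuous_const)

lemma hasCompactSupport_jac {ψ : Euc n → Fin m → ℝ} (hψ : HasCompactSupport ψ) (i : Fin m)
    (j : Fin n) : HasCompactSupport fun x => jac ψ x i j :=
  (hψ.fderiv ℝ).comp_left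
    (g := fun D : Euc n →L[ℝ] (Fin m → ℝ) => D (EuclideanSpace.single j 1) i) rfl

variable {ι : Type*} [Fintype ι]

/-- `F = ∑ₛ θₛ ⊗ eₛ ℋ¹⌞[aₛ, aₛ + Lₛ eₛ]`. -/
def IsSegmentNetwork (F : MatMeas m n) (a e : ι → Euc n) (L : ι → ℝ) (θ : ι → Fin m → ℝ) :
    Prop :=
  ∀ B, MeasurableSet B → ∀ i j, F i j B =
    ∑ s, (μH[1] : Measure (Euc n)).real (B ∩ segment ℝ (a s) (a s + L s • e s)) * (θ s i * e s j)

namespace IsSegmentNetwork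

variable {F : MatMeas m n} {a e : ι → Euc n} {L : ι → ℝ} {θ : ι → Fin m → ℝ}

lemma sum_sInt_jac (hF : IsSegmentNetwork F a e L θ) (he : ∀ s, ‖e s‖ = 1) (hL : ∀ s, 0 ≤ L s)
    {ψ : Euc n → Fin m → ℝ} (hψ : ContDiff ℝ 1 ψ) (hψc : HasCompactSupport ψ) :
    ∑ i, ∑ j, sInt (F i j) (fun x => jac ψ x i j) =
      ∑ s, ∑ i, θ s i * (ψ (a s + L s • e s) i - ψ (a s) i) := by
  set μ : ι → Measure (Euc n) := fun s => μH[1].restrict (segment ℝ (a s) (a s + L s • e s))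
  have : ∀ s, IsFiniteMeasure (μ s) := fun s => isFiniteMeasure_restrict.mpr (by simp)
  have hint : ∀ s i j, Integrable (fun x => jac ψ x i j) (μ s) := fun s i j =>
    (continuous_jac hψ i j).integrable_of_hasCompactSupport (hasCompactSupport_jac hψc i j)
  have hsInt : ∀ i j, sInt (F i j) (fun x => jac ψ x i j) =
      ∑ s, θ s i * (e s j * ∫ x, jac ψ x i j ∂μ s) := fun i j => by
    rw [sInt_eq_sum_integral μ (fun s => θ s i * e s j) (fun B hB => ?_) (continuous_jac hψ i j)
      (hasCompactSupport_jac hψc i j)]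
    · exact Finset.sum_congr rfl fun s _ => mul_assoc _ _ _
    · simp only [hF B hB i j, μ, measureReal_restrict_apply hB, mul_comm]
  have hseg : ∀ s i, ∑ j, e s j * ∫ x, jac ψ x i j ∂μ s = ψ (a s + L s • e s) i - ψ (a s) i :=
    fun s i => by
      simp_rw [← integral_const_mul]
      rw [← integral_finsetSum _ fun j _ => (hint s i j).const_mul _]
      simp_rw [sum_mul_jac (hψ.differentiable one_ne_zero _)]
      exact integral_fderiv_segment (contDiff_pi.mp hψ i) (a s) (he s) (hL s)
  simp_rw [hsInt, ← hseg, Finset.mul_sum]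
  conv_lhs => arg 2; ext i; rw [Finset.sum_comm]
  exact Finset.sum_comm

lemma tvH_le {h : (Fin m → ℝ) → ℝ} (hcube : ∀ θ, h θ ≤ 1 → ∀ i, |θ i| ≤ 1)
    (hF : IsSegmentNetwork F a e L θ) (he : ∀ s, ‖e s‖ = 1) (hL : ∀ s, 0 ≤ L s)
    (hθ : ∀ s, h (θ s) ≤ 1) : tvH h F ≤ ∑ s, L s := by
  set μ : Measure (Euc n) := ∑ s, μH[1].restrict (segment ℝ (a s) (a s + L s • e s))
  have : IsFiniteMeasure μ := by
    have : ∀ s, IsFiniteMeasure (μH[1].restrict (segment ℝ (a s) (a s + L s • e s))) :=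
      fun s => isFiniteMeasure_restrict.mpr (by simp)
    infer_instance
  have hμ : ∀ B, MeasurableSet B → μ.real B =
      ∑ s, (μH[1] : Measure (Euc n)).real (B ∩ segment ℝ (a s) (a s + L s • e s)) := by
    intro B hB
    simp only [μ, measureReal_def, Measure.finsetSum_apply, Measure.restrict_apply hB]
    exact ENNReal.toReal_sum fun s _ => ne_top_of_le_ne_top (by simp)
      (measure_mono inter_subset_right)
  have hlen : μ.real univ = ∑ s, L s := by
    rw [hμ _ MeasurableSet.univ]
    refine Finset.sum_congr rfl fun s _ => ?_
    rw [univ_inter, measureReal_def, hausdorffMeasure_segment, edist_dist, dist_self_add_right,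
      norm_smul, he s, mul_one, Real.norm_of_nonneg (hL s), ENNReal.toReal_ofReal (hL s)]
  refine hlen ▸ tvH_le_of_le F μ fun B hB => ?_
  have hFB : (fun i j => F i j B) = ∑ s,
      (μH[1] : Measure (Euc n)).real (B ∩ segment ℝ (a s) (a s + L s • e s)) •
        outer (θ s) (e s) := by
    ext i j
    simp only [hF B hB i j, Finset.sum_apply, Pi.smul_apply, smul_eq_mul, outer]
  rw [hFB, hμ B hB]
  exact genNorm_sum_smul_outer_le hcube (fun _ => measureReal_nonneg) hθ (fun s => (he s).le)

end IsSegmentNetwork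

end Network

section Calibration

variable {m n : ℕ}

lemma matVec_rows (v : Fin m → Euc n) (u : Euc n) :
    matVec (fun i j => v i j) u = fun i => inner ℝ (v i) u := by
  ext i
  simp [matVec, PiLp.inner_apply, mul_comm]

def matVecCLM (M : Fin m → Fin n → ℝ) : Euc n →L[ℝ] (Fin m → ℝ) :=
  LinearMap.toContinuousLinearMap (Matrix.toLin' (Matrix.of M)) ∘L
    (EuclideanSpace.equiv (Fin n) ℝ).toContinuousLinearMap

lemma matVecCLM_apply (M : Fin m → Fin n → ℝ) (x : Euc n) : matVecCLM M x = matVec M x := by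
  ext i
  simp [matVecCLM, matVec, Matrix.mulVec, dotProduct]

lemma jac_eq_of_eventuallyEq {ψ : Euc n → Fin m → ℝ} {M : Fin m → Fin n → ℝ} {x : Euc n}
    (hψ : ψ =ᶠ[𝓝 x] matVecCLM M) : jac ψ x = M := by
  ext i j
  simp [jac, hψ.fderiv_eq, ContinuousLinearMap.fderiv, matVecCLM_apply, matVec_single]

lemma exists_testField_eventuallyEq_matVecCLM (M : Fin m → Fin n → ℝ) {K : Set (Euc n)}
    (hK : IsCompact K) : ∃ ψ : Euc n → Fin m → ℝ, ContDiff ℝ (⊤ : ℕ∞) ψ ∧ HasCompactSupport ψ ∧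
      ∀ x ∈ K, ψ =ᶠ[𝓝 x] matVecCLM M := by
  obtain ⟨r, hr, hKr⟩ := hK.isBounded.subset_ball_lt 0 0
  let χ : ContDiffBump (0 : Euc n) := ⟨r, 2 * r, hr, by linarith⟩
  refine ⟨fun x => χ x • matVecCLM M x, χ.contDiff.smul (matVecCLM M).contDiff,
    χ.hasCompactSupport.smul_right, fun x hx => ?_⟩
  filter_upwards [χ.eventuallyEq_one_of_mem_ball (hKr hx)] with y hy
  simp [hy]

lemma frob_univ_eq_of_isBoundary {G : MatMeas m n} {F0 : VecMeas m n} {K : Set (Euc n)}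
    (hK : IsCompact K) (hGK : suppIn G K) (hG : isBoundary G F0) {M : Fin m → Fin n → ℝ}
    {ψ : Euc n → Fin m → ℝ} (hψ : ContDiff ℝ (⊤ : ℕ∞) ψ) (hψc : HasCompactSupport ψ)
    (hψM : ∀ x ∈ K, ψ =ᶠ[𝓝 x] matVecCLM M) :
    frob M (fun i j => G i j univ) = ∑ i, sInt (F0 i) (fun x => ψ x i) := by
  rw [← hG ψ hψ hψc]
  refine Finset.sum_congr rfl fun i _ => Finset.sum_congr rfl fun j _ => ?_
  rw [sInt_eq_mul_apply_univ hK.isClosed.measurableSet (fun B hB hBK => hGK B hB hBK i j)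
    fun x hx => congrFun (congrFun (jac_eq_of_eventuallyEq (hψM x hx)) i) j]

end Calibration

section HexagonalNorm

lemma mul_add_mul_le_max_abs {g₀ g₁ t₀ t₁ : ℝ} (h₀ : |t₀| ≤ 1) (h₁ : |t₁| ≤ 1)
    (h₀₁ : |t₀ - t₁| ≤ 1) : g₀ * t₀ + g₁ * t₁ ≤ max (max |g₀| |g₁|) |g₀ + g₁| := by
  have c₀ : |g₀| ≤ max (max |g₀| |g₁|) |g₀ + g₁| := le_max_of_le_left (le_max_left _ _)
  have c₁ : |g₁| ≤ max (max |g₀| |g₁|) |g₀ + g₁| := le_max_of_le_left (le_max_right _ _)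
  have c₂ : |g₀ + g₁| ≤ max (max |g₀| |g₁|) |g₀ + g₁| := le_max_right _ _
  rw [abs_le] at h₀ h₁ h₀₁
  -- On the hexagon `{|t₀|, |t₁|, |t₀ - t₁| ≤ 1}` the linear form is maximal at a vertex
  -- `±(1, 0), ±(0, 1), ±(1, 1)`; in each sign case one product of two constraints certifies it.
  rcases le_total 0 g₀ with a | a <;> rcases le_total 0 g₁ with b | b <;>
    rcases le_total 0 (g₀ + g₁) with c | c <;>
    nlinarith [le_abs_self g₀, neg_abs_le g₀, le_abs_self g₁, neg_abs_le g₁,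
      le_abs_self (g₀ + g₁), neg_abs_le (g₀ + g₁)]

lemma h2_cube : ∀ θ, h2 θ ≤ 1 → ∀ i, |θ i| ≤ 1 := by
  intro θ hθ i
  fin_cases i
  · exact (le_max_of_le_left (le_max_left _ _)).trans hθ
  · exact (le_max_of_le_left (le_max_right _ _)).trans hθ

lemma h2_basis : ∀ i, h2 (Pi.single i 1) ≤ 1 ∧ h2 (-Pi.single i 1) ≤ 1 := by
  intro i
  fin_cases i <;> simp [h2]

lemma dualNorm_h2_le (g : Fin 2 → ℝ) : dualNorm h2 g ≤ max (max |g 0| |g 1|) |g 0 + g 1| := by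
  refine Real.sSup_le ?_ ((abs_nonneg _).trans (le_max_right _ _))
  rintro r ⟨θ, hθ, rfl⟩
  rw [Fin.sum_univ_two]
  exact mul_add_mul_le_max_abs (h2_cube θ hθ 0) (h2_cube θ hθ 1)
    ((le_max_right _ _).trans hθ)

end HexagonalNorm

section Configuration

lemma sqrt_three_mul_self : √3 * √3 = 3 := Real.mul_self_sqrt (by norm_num)

lemma norm_e1 : ‖e1‖ = 1 := by
  simp [EuclideanSpace.norm_eq, e1, pt]

lemma norm_e2 : ‖e2‖ = 1 := by
  rw [EuclideanSpace.norm_eq, Real.sqrt_eq_one]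
  simp [e2, pt, div_pow]
  norm_num

lemma norm_e3 : ‖e3‖ = 1 := by
  rw [EuclideanSpace.norm_eq, Real.sqrt_eq_one]
  simp [e3, pt, div_pow]
  norm_num

lemma e2_add_e3 : e2 + e3 = e1 := by
  ext j
  fin_cases j <;> simp [e1, e2, e3, pt] <;> ring

def calibMatrix : Fin 2 → Fin 2 → ℝ := fun i j => ![e2, e3] i j

lemma inSubdiffH_calibMatrix : inSubdiffH h2 calibMatrix := by
  intro u hu
  have hunit : ∀ v : Euc 2, ‖v‖ = 1 → |inner ℝ v u| ≤ 1 := fun v hv =>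
    (abs_real_inner_le_norm v u).trans (by rw [hv, one_mul]; exact hu)
  unfold calibMatrix
  rw [matVec_rows]
  refine (dualNorm_h2_le _).trans (max_le (max_le ?_ ?_) ?_)
  · exact hunit e2 norm_e2
  · exact hunit e3 norm_e3
  · simpa [← inner_add_left, e2_add_e3] using hunit e1 norm_e1


def netStart : Fin 5 → Euc 2 := ![pp1, pp2, pm1, pp3, pm1]
def netEnd : Fin 5 → Euc 2 := ![pm1, pp1, pm2, pp1, pm3]
def netDir : Fin 5 → Euc 2 := ![e1, e2, e2, e3, e3]
def netLength : Fin 5 → ℝ := ![2, 1, 1, 1, 1]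
def netWeight : Fin 5 → Fin 2 → ℝ := ![θ1, θ2, θ2, θ3, θ3]

lemma netStart_add_smul (s : Fin 5) : netStart s + netLength s • netDir s = netEnd s := by
  fin_cases s <;> simp [netStart, netEnd, netDir, netLength, pp1, pp2, pp3, pm1, pm2, pm3]
  module

lemma norm_netDir (s : Fin 5) : ‖netDir s‖ = 1 := by
  fin_cases s <;> simp [netDir, norm_e1, norm_e2, norm_e3]

lemma netLength_nonneg (s : Fin 5) : 0 ≤ netLength s := by
  fin_cases s <;> norm_num [netLength]

lemma h2_netWeight_le (s : Fin 5) : h2 (netWeight s) ≤ 1 := by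
  fin_cases s <;> simp [netWeight, h2, θ1, θ2, θ3]

lemma disjoint_segment_of_coord_le {n : ℕ} {u v u' v' : Euc n} (k : Fin n) {c c' : ℝ}
    (hc : c < c') (hu : u k ≤ c) (hv : v k ≤ c) (hu' : c' ≤ u' k) (hv' : c' ≤ v' k) :
    Disjoint (segment ℝ u v) (segment ℝ u' v') := by
  have hlin : IsLinearMap ℝ fun x : Euc n => x k := (EuclideanSpace.proj k).isLinear
  refine Set.disjoint_left.mpr fun x hx hx' => ?_
  have h₁ := (convex_halfSpace_le hlin c).segment_subset hu hv hx
  have h₂ := (convex_halfSpace_ge hlin c').segment_subset hu' hv' hx'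
  exact absurd (h₁.trans_lt hc) (not_lt.mpr h₂)

lemma measureReal_inter_union_segment {n : ℕ} {B : Set (Euc n)} (hB : MeasurableSet B)
    {u v u' v' : Euc n} (hd : Disjoint (segment ℝ u v) (segment ℝ u' v')) :
    (μH[1] : Measure (Euc n)).real (B ∩ (segment ℝ u v ∪ segment ℝ u' v')) =
      (μH[1] : Measure (Euc n)).real (B ∩ segment ℝ u v) +
        (μH[1] : Measure (Euc n)).real (B ∩ segment ℝ u' v') := by
  have hT : IsCompact (segment ℝ u' v') := by
    rw [segment_eq_image]
    exact isCompact_Icc.image (by fun_prop)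
  rw [inter_union_distrib_left]
  exact measureReal_union (hd.mono inter_subset_right inter_subset_right)
    (hB.inter hT.isClosed.measurableSet)
    (ne_top_of_le_ne_top (by simp) (measure_mono inter_subset_right))
    (ne_top_of_le_ne_top (by simp) (measure_mono inter_subset_right))

lemma isSegmentNetwork_of_segMass {F : MatMeas 2 2}
    (hF : ∀ B : Set (Euc 2), MeasurableSet B → ∀ i j,
      F i j B = segMass (segment ℝ pp1 pm1) θ1 e1 B i j
        + segMass (segment ℝ pp2 pp1 ∪ segment ℝ pm1 pm2) θ2 e2 B i j
        + segMass (segment ℝ pp3 pp1 ∪ segment ℝ pm1 pm3) θ3 e3 B i j) :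
    IsSegmentNetwork F netStart netDir netLength netWeight := by
  intro B hB i j
  have hd₂ : Disjoint (segment ℝ pp2 pp1) (segment ℝ pm1 pm2) :=
    disjoint_segment_of_coord_le 0 (c := -1) (c' := 1) (by norm_num)
      (by norm_num [pp2, pm2, e1, e2, pt]) (by norm_num [pp1, pm1, e1, pt])
      (by norm_num [pm1, e1, pt]) (by norm_num [pm2, e1, e2, pt])
  have hd₃ : Disjoint (segment ℝ pp3 pp1) (segment ℝ pm1 pm3) :=
    disjoint_segment_of_coord_le 0 (c := -1) (c' := 1) (by norm_num)
      (by norm_num [pp3, pm3, e1, e3, pt]) (by norm_num [pp1, pm1, e1, pt])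
      (by norm_num [pm1, e1, pt]) (by norm_num [pm3, e1, e3, pt])
  simp only [hF B hB i j, segMass, ← measureReal_def, measureReal_inter_union_segment hB hd₂,
    measureReal_inter_union_segment hB hd₃, netStart_add_smul, Fin.sum_univ_five]
  simp [netStart, netEnd, netDir, netWeight]
  ring

lemma sInt_F0_apply {F0 : VecMeas 2 2}
    (hF0 : ∀ B : Set (Euc 2), MeasurableSet B → ∀ i,
      F0 i B = θ2 i * (dirac01 pm2 B - dirac01 pp2 B)
        + θ3 i * (dirac01 pm3 B - dirac01 pp3 B))
    {ψ : Euc 2 → Fin 2 → ℝ} (hψ : Continuous ψ) (hψc : HasCompactSupport ψ) (i : Fin 2) :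
    sInt (F0 i) (fun x => ψ x i) =
      θ2 i * (ψ pm2 i - ψ pp2 i) + θ3 i * (ψ pm3 i - ψ pp3 i) := by
  have hdirac : ∀ p B, MeasurableSet B → (Measure.dirac p).real B = dirac01 p B := fun p B hB => by
    by_cases hp : p ∈ B <;> simp [measureReal_def, Measure.dirac_apply' p hB, dirac01, hp]
  rw [sInt_eq_sum_integral (fun s : Fin 4 => Measure.dirac (![pm2, pp2, pm3, pp3] s))
    ![θ2 i, -θ2 i, θ3 i, -θ3 i] (fun B hB => ?_) (f := fun x => ψ x i)
    ((continuous_apply i).comp hψ) (hψc.comp_left (g := fun v : Fin 2 → ℝ => v i) rfl)]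
  · simp [Fin.sum_univ_four]
    ring
  · simp [hF0 B hB i, Fin.sum_univ_four, hdirac _ B hB]
    ring

lemma isBoundary_of_isSegmentNetwork {F : MatMeas 2 2}
    (hF : IsSegmentNetwork F netStart netDir netLength netWeight) {F0 : VecMeas 2 2}
    (hF0 : ∀ B : Set (Euc 2), MeasurableSet B → ∀ i,
      F0 i B = θ2 i * (dirac01 pm2 B - dirac01 pp2 B)
        + θ3 i * (dirac01 pm3 B - dirac01 pp3 B)) :
    isBoundary F F0 := by
  intro ψ hψ hψc
  rw [hF.sum_sInt_jac norm_netDir netLength_nonneg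
    (hψ.of_le (by simp)) hψc]
  simp_rw [netStart_add_smul]
  rw [Finset.sum_congr rfl fun i _ => sInt_F0_apply hF0 hψ.continuous hψc i]
  simp [Fin.sum_univ_five, Fin.sum_univ_two, netStart, netEnd, netWeight, θ1, θ2, θ3]
  ring

lemma tvH_le_six_of_isSegmentNetwork {F : MatMeas 2 2}
    (hF : IsSegmentNetwork F netStart netDir netLength netWeight) : tvH h2 F ≤ 6 := by
  have hsum : ∑ s, netLength s = 6 := by
    simp [netLength, Fin.sum_univ_succ]
    norm_num
  exact hsum ▸ hF.tvH_le h2_cube norm_netDir netLength_nonneg h2_netWeight_le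

lemma frob_calibMatrix_eq_six {F0 : VecMeas 2 2}
    (hF0 : ∀ B : Set (Euc 2), MeasurableSet B → ∀ i,
      F0 i B = θ2 i * (dirac01 pm2 B - dirac01 pp2 B)
        + θ3 i * (dirac01 pm3 B - dirac01 pp3 B))
    {G : MatMeas 2 2} (hGc : suppInCpt G) (hG : isBoundary G F0) :
    frob calibMatrix (fun i j => G i j univ) = 6 := by
  obtain ⟨K, hK, hGK⟩ := hGc
  obtain ⟨ψ, hψ, hψc, hψM⟩ := exists_testField_eventuallyEq_matVecCLM calibMatrix
    (hK.union (Set.toFinite {pm2, pp2, pm3, pp3}).isCompact)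
  have hψp : ∀ p ∈ ({pm2, pp2, pm3, pp3} : Set (Euc 2)), ψ p = matVec calibMatrix p :=
    fun p hp => (hψM p (Or.inr hp)).eq_of_nhds.trans (matVecCLM_apply _ _)
  rw [frob_univ_eq_of_isBoundary hK hGK hG hψ hψc fun x hx => hψM x (Or.inl hx),
    Fin.sum_univ_two, sInt_F0_apply hF0 hψ.continuous hψc 0,
    sInt_F0_apply hF0 hψ.continuous hψc 1,
    hψp pm2 (by simp), hψp pp2 (by simp), hψp pm3 (by simp), hψp pp3 (by simp)]
  simp [calibMatrix, matVec, Fin.sum_univ_two, θ2, θ3, pm2, pm3, pp2, pp3, e1, e2, e3, pt]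
  nlinarith [sqrt_three_mul_self]

end Configuration

/-- two sources and sinks: for the boundary datum
`F₀ = θ²(δ_{p₋₂} - δ_{p₊₂}) + θ³(δ_{p₋₃} - δ_{p₊₃})`, the network
`F = θ¹⊗e₁ ℋ¹⌞[p₊₁,p₋₁] + θ²⊗e₂ ℋ¹⌞([p₊₂,p₊₁] ∪ [p₋₁,p₋₂]) + θ³⊗e₃ ℋ¹⌞([p₊₃,p₊₁] ∪ [p₋₁,p₋₃])`
satisfies `∂F = F₀` and minimizes `|·|_H` among compactly supported measures `G`
with `∂G = F₀`. -/
theorem statement14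
    (F : MatMeas 2 2)
    (hF : ∀ B : Set (Euc 2), MeasurableSet B → ∀ i j,
      F i j B = segMass (segment ℝ pp1 pm1) θ1 e1 B i j
        + segMass (segment ℝ pp2 pp1 ∪ segment ℝ pm1 pm2) θ2 e2 B i j
        + segMass (segment ℝ pp3 pp1 ∪ segment ℝ pm1 pm3) θ3 e3 B i j)
    (F0 : VecMeas 2 2)
    (hF0 : ∀ B : Set (Euc 2), MeasurableSet B → ∀ i,
      F0 i B = θ2 i * (dirac01 pm2 B - dirac01 pp2 B)
        + θ3 i * (dirac01 pm3 B - dirac01 pp3 B)) :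
    isBoundary F F0 ∧
    ∀ G : MatMeas 2 2, suppInCpt G → isBoundary G F0 → tvH h2 F ≤ tvH h2 G := by
  have hnet := isSegmentNetwork_of_segMass hF
  refine ⟨isBoundary_of_isSegmentNetwork hnet hF0, fun G hGc hG => ?_⟩
  calc tvH h2 F ≤ 6 := tvH_le_six_of_isSegmentNetwork hnet
    _ = frob calibMatrix (fun i j => G i j univ) := (frob_calibMatrix_eq_six hF0 hGc hG).symm
    _ ≤ genNorm h2 (fun i j => G i j univ) := le_genNorm h2_cube h2_basis inSubdiffH_calibMatrix _
    _ ≤ tvH h2 G := genNorm_univ_le_tvH h2_cube h2_basis G
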